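/- Let t ∈ ℓ¹ and suppose x ∈ [[0,t]]_sp satisfies π_m(x) ≠ x for every m ≥ 0 (i.e., x does not terminate in zeros). Then x = t. In other words, the only point of a stick-breaking path that does not terminate in zeros is its endpoint: [[0,t]]_sp \ [[0,t]]°_sp ⊆ {t}. -/

import Mathlib

/-- `ℓ¹`, the Banach space of absolutely summable real sequences. -/
noncomputable abbrev Ell1 : Type := lp (fun _ : ℕ => ℝ) 1

/-- Coordinate truncation keeping the first `m` coordinates. -/
noncomputable def trunc (m : ℕ) (x : Ell1) : Ell1 :=
  ⟨fun i => if i < m then x i else 0, by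
    refine Memℓp.of_exponent_ge (memℓp_zero ?_) zero_le
    refine Set.Finite.subset (Set.finite_Iio m) ?_
    intro i hi
    simp only [Set.mem_setOf_eq] at hi
    by_contra h
    simp only [Set.mem_Iio, not_lt] at h
    exact hi (if_neg (not_lt.mpr h))⟩

/-- The open stick-breaking path `[[0,x]]°_sp`. -/
def stickCore (x : Ell1) : Set Ell1 :=
  ⋃ m : ℕ, {y | ∃ s ∈ Set.Icc (0 : ℝ) 1, y = (1 - s) • trunc m x + s • trunc (m + 1) x}

/-- The stick-breaking path `[[0,x]]_sp`, the closure of `[[0,x]]°_sp` in `ℓ¹`. -/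
noncomputable def stickPath (x : Ell1) : Set Ell1 :=
  closure (stickCore x)

open Filter

lemma trunc_apply (m : ℕ) (x : Ell1) (i : ℕ) :
    trunc m x i = if i < m then x i else 0 := rfl

lemma trunc_eq_sum (t : Ell1) (m : ℕ) :
    trunc m t = ∑ i ∈ Finset.range m, lp.single 1 i (t i) := by
  apply lp.ext
  funext j
  rw [lp.coeFn_sum, Finset.sum_apply, trunc_apply]
  simp only [lp.single_apply]
  simp only [Pi.single_apply]
  rw [Finset.sum_ite_eq]
  simp [Finset.mem_range]

lemma tendsto_trunc (t : Ell1) : Tendsto (fun m => trunc m t) atTop (nhds t) := by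
  have h := (lp.hasSum_single (E := fun _ : ℕ => ℝ) (ENNReal.one_ne_top) t).tendsto_sum_nat
  have : (fun m => trunc m t) = fun m => ∑ i ∈ Finset.range m, lp.single 1 i (t i) := by
    funext m; exact trunc_eq_sum t m
  rw [this]
  exact h

/-- The `m`-th segment of the stick-breaking path. -/
def seg (t : Ell1) (m : ℕ) : Set Ell1 :=
  (fun s : ℝ => (1 - s) • trunc m t + s • trunc (m + 1) t) '' Set.Icc 0 1

lemma stickCore_eq_iUnion_seg (t : Ell1) : stickCore t = ⋃ m, seg t m := by
  unfold stickCore seg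
  refine Set.iUnion_congr fun m => ?_
  ext y
  constructor
  · rintro ⟨s, hs, rfl⟩; exact ⟨s, hs, rfl⟩
  · rintro ⟨s, hs, rfl⟩; exact ⟨s, hs, rfl⟩

lemma seg_isCompact (t : Ell1) (m : ℕ) : IsCompact (seg t m) := by
  apply isCompact_Icc.image
  exact ((continuous_const.sub continuous_id).smul continuous_const).add
    (continuous_id.smul continuous_const)

lemma seg_dist_le (t : Ell1) (m : ℕ) {y : Ell1} (hy : y ∈ seg t m) {ε : ℝ}
    (hm : dist (trunc m t) t ≤ ε) (hm1 : dist (trunc (m + 1) t) t ≤ ε) :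
    dist y t ≤ ε := by
  obtain ⟨s, ⟨hs0, hs1⟩, rfl⟩ := hy
  have key : (1 - s) • trunc m t + s • trunc (m + 1) t - t
      = (1 - s) • (trunc m t - t) + s • (trunc (m + 1) t - t) := by
    simp only [smul_sub]
    module
  have hε : 0 ≤ ε := le_trans dist_nonneg hm
  rw [dist_eq_norm, key]
  calc ‖(1 - s) • (trunc m t - t) + s • (trunc (m + 1) t - t)‖
      ≤ ‖(1 - s) • (trunc m t - t)‖ + ‖s • (trunc (m + 1) t - t)‖ := norm_add_le _ _
    _ ≤ (1 - s) * ε + s * ε := by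
        have h1 : ‖trunc m t - t‖ ≤ ε := by rw [← dist_eq_norm]; exact hm
        have h2 : ‖trunc (m + 1) t - t‖ ≤ ε := by rw [← dist_eq_norm]; exact hm1
        rw [norm_smul, norm_smul, Real.norm_eq_abs, Real.norm_eq_abs,
          abs_of_nonneg (by linarith : (0:ℝ) ≤ 1 - s), abs_of_nonneg hs0]
        exact add_le_add (mul_le_mul_of_nonneg_left h1 (by linarith))
          (mul_le_mul_of_nonneg_left h2 hs0)
    _ = ε := by ring

lemma closure_stickCore_subset (t : Ell1) :
    closure (stickCore t) ⊆ stickCore t ∪ {t} := by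
  intro x hx
  by_cases hxt : x = t
  · exact Or.inr hxt
  left
  set ε := dist x t with hε
  have hεpos : 0 < ε := dist_pos.mpr hxt
  obtain ⟨M, hM⟩ : ∃ M : ℕ, ∀ k ≥ M, dist (trunc k t) t < ε / 4 := by
    have := (Metric.tendsto_atTop.mp (tendsto_trunc t)) (ε / 4) (by linarith)
    exact this
  -- split the core
  have hsplit : stickCore t = (⋃ m ∈ Finset.range M, seg t m) ∪ (⋃ m ∈ {m : ℕ | M ≤ m}, seg t m) := by
    rw [stickCore_eq_iUnion_seg]
    ext y
    simp only [Set.mem_iUnion, Set.mem_union, Finset.mem_range, Set.mem_setOf_eq]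
    constructor
    · rintro ⟨m, hm⟩
      rcases lt_or_ge m M with h | h
      · exact Or.inl ⟨m, h, hm⟩
      · exact Or.inr ⟨m, h, hm⟩
    · rintro (⟨m, _, hm⟩ | ⟨m, _, hm⟩) <;> exact ⟨m, hm⟩
  rw [hsplit, closure_union] at hx
  have hB : x ∉ closure (⋃ m ∈ {m : ℕ | M ≤ m}, seg t m) := by
    have hsub : (⋃ m ∈ {m : ℕ | M ≤ m}, seg t m) ⊆ {y | ε / 2 ≤ dist y x} := by
      rintro y hy
      simp only [Set.mem_iUnion, Set.mem_setOf_eq] at hy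
      obtain ⟨m, hm, hym⟩ := hy
      have hd : dist y t ≤ ε / 4 :=
        seg_dist_le t m hym (le_of_lt (hM m hm)) (le_of_lt (hM (m + 1) (le_trans hm (Nat.le_succ m))))
      have := dist_triangle x y t
      simp only [Set.mem_setOf_eq]
      have hxy : dist x y ≥ ε - ε / 4 := by
        have : ε ≤ dist x y + dist y t := by rw [hε] at *; exact dist_triangle x y t
        linarith
      rw [dist_comm]
      linarith
    have hclosed : IsClosed {y : Ell1 | ε / 2 ≤ dist y x} :=
      isClosed_le continuous_const (continuous_id.dist continuous_const)
    intro hcl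
    have := (closure_minimal hsub hclosed) hcl
    simp only [Set.mem_setOf_eq, dist_self] at this
    linarith
  have hA : x ∈ closure (⋃ m ∈ Finset.range M, seg t m) := hx.resolve_right hB
  have hAclosed : IsClosed (⋃ m ∈ Finset.range M, seg t m) :=
    isClosed_biUnion_finset fun m _ => (seg_isCompact t m).isClosed
  rw [hAclosed.closure_eq] at hA
  rw [stickCore_eq_iUnion_seg]
  simp only [Set.mem_iUnion, Finset.mem_range] at hA ⊢
  obtain ⟨m, _, hm⟩ := hA
  exact ⟨m, hm⟩

lemma trunc_of_mem_stickCore {t x : Ell1} (hx : x ∈ stickCore t) :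
    ∃ m : ℕ, trunc m x = x := by
  simp only [stickCore, Set.mem_iUnion, Set.mem_setOf_eq] at hx
  obtain ⟨m, s, _, rfl⟩ := hx
  refine ⟨m + 1, ?_⟩
  apply lp.ext
  funext j
  rw [trunc_apply]
  by_cases hj : j < m + 1
  · rw [if_pos hj]
  · rw [if_neg hj]
    push_neg at hj
    have h1 : ¬ j < m := by omega
    have h2 : ¬ j < m + 1 := by omega
    have : ((1 - s) • trunc m t + s • trunc (m + 1) t) j
        = (1 - s) * (trunc m t j) + s * (trunc (m + 1) t j) := by
      rw [lp.coeFn_add, Pi.add_apply, lp.coeFn_smul, lp.coeFn_smul]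
      rfl
    rw [this, trunc_apply, trunc_apply, if_neg h1, if_neg h2]
    ring

/-- the only point of a stick-breaking path that does not terminate in zeros is
its endpoint; moreover `[[0,t]]_sp \ [[0,t]]°_sp ⊆ {t}`. -/
theorem stickPath_not_terminating_eq_endpoint (t : Ell1) :
    (∀ x ∈ stickPath t, (∀ m : ℕ, trunc m x ≠ x) → x = t) ∧
      stickPath t \ stickCore t ⊆ {t} := by
  constructor
  · intro x hx hne
    rcases closure_stickCore_subset t hx with h | h
    · obtain ⟨m, hm⟩ := trunc_of_mem_stickCore h
      exact absurd hm (hne m)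
    · exact h
  · rintro x ⟨hx, hxc⟩
    rcases closure_stickCore_subset t hx with h | h
    · exact absurd h hxc
    · exact h
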